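/- arXiv:2404.07886 — 2 statements merged into one kernel-verified Lean document; each statement's English description precedes it below -/
import Mathlib

section
/- (Orthogonal Procrustes) Let B ∈ ℝ^{n×n} have singular value decomposition B = UΣVᵀ with U, V orthogonal. Then D* = UVᵀ maximizes D ↦ trace(DᵀB) over all orthogonal n×n matrices D; equivalently, D* minimizes D ↦ ‖DC - Y‖_F² + λ‖D - D₀‖_F² over orthogonal D, where B = YCᵀ + λD₀. -/
/-!
Write `W = Vᵀ Dᵀ U`, which is orthogonal whenever `D` is. By cyclicity of the trace,
`trace (Dᵀ U Σ Vᵀ) = trace (W Σ) = ∑ i, W i i * σ i`, and the entries of an orthogonal matrix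
are bounded by `1`, so this is at most `∑ i, σ i`, the value attained at `D = U Vᵀ` (`W = 1`).
For orthogonal `D` the Procrustes cost expands as a constant minus `2 trace (Dᵀ (Y Cᵀ + λ D₀))`,
so minimizing it is the same as maximizing that trace.
-/

open Matrix

namespace Matrix

variable {ι κ R : Type*} [Fintype ι] [Fintype κ]

theorem sum_sq_entries_eq_trace_transpose_mul_self [CommSemiring R] (M : Matrix ι κ R) :
    ∑ i, ∑ j, M i j ^ 2 = trace (Mᵀ * M) := by
  simp only [trace, diag, mul_apply, transpose_apply, sq]
  exact Finset.sum_comm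

variable [DecidableEq ι]

theorem sum_sq_entries_mul_sub_of_transpose_mul_self_eq_one [CommRing R] {D : Matrix ι ι R}
    (hD : Dᵀ * D = 1) (C Y : Matrix ι κ R) :
    ∑ i, ∑ j, (D * C - Y) i j ^ 2 =
      trace (Cᵀ * C) + trace (Yᵀ * Y) - 2 * trace (Dᵀ * (Y * Cᵀ)) := by
  have hDC : (D * C)ᵀ * (D * C) = Cᵀ * C := by
    rw [transpose_mul, Matrix.mul_assoc, ← Matrix.mul_assoc Dᵀ, hD, Matrix.one_mul]
  have hcross : trace ((D * C)ᵀ * Y) = trace (Dᵀ * (Y * Cᵀ)) := by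
    rw [transpose_mul, Matrix.mul_assoc, trace_mul_comm, Matrix.mul_assoc]
  have hcross' : trace (Yᵀ * (D * C)) = trace (Dᵀ * (Y * Cᵀ)) := by
    rw [← trace_transpose, transpose_mul, transpose_transpose, hcross]
  rw [sum_sq_entries_eq_trace_transpose_mul_self, transpose_sub, Matrix.sub_mul, Matrix.mul_sub,
    Matrix.mul_sub, trace_sub, trace_sub, trace_sub, hDC, hcross, hcross']
  ring

theorem trace_mul_diagonal_le_sum_of_mem_orthogonalGroup {W : Matrix ι ι ℝ}
    (hW : W ∈ orthogonalGroup ι ℝ) {σ : ι → ℝ} (hσ : ∀ i, 0 ≤ σ i) :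
    trace (W * diagonal σ) ≤ ∑ i, σ i := by
  simp only [trace, diag, mul_diagonal]
  refine Finset.sum_le_sum fun i _ => mul_le_of_le_one_left (hσ i) ?_
  exact (le_abs_self _).trans (entry_norm_bound_of_unitary hW i i)

theorem trace_transpose_mul_svd_eq_sum [CommRing R] {U V : Matrix ι ι R}
    (hU : Uᵀ * U = 1) (hV : Vᵀ * V = 1) (σ : ι → R) :
    trace ((U * Vᵀ)ᵀ * (U * diagonal σ * Vᵀ)) = ∑ i, σ i := by
  have hcancel : (U * Vᵀ)ᵀ * (U * diagonal σ * Vᵀ) = V * (Uᵀ * U * diagonal σ) * Vᵀ := by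
    simp only [transpose_mul, transpose_transpose, Matrix.mul_assoc]
  rw [hcancel, hU, Matrix.one_mul, trace_mul_comm, ← Matrix.mul_assoc, hV, Matrix.one_mul,
    trace_diagonal]

theorem trace_transpose_mul_svd_le {U V D : Matrix ι ι ℝ} (hU : U ∈ orthogonalGroup ι ℝ)
    (hV : V ∈ orthogonalGroup ι ℝ) (hD : D ∈ orthogonalGroup ι ℝ) {σ : ι → ℝ}
    (hσ : ∀ i, 0 ≤ σ i) :
    trace (Dᵀ * (U * diagonal σ * Vᵀ)) ≤ trace ((U * Vᵀ)ᵀ * (U * diagonal σ * Vᵀ)) := by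
  have hW : Vᵀ * Dᵀ * U ∈ orthogonalGroup ι ℝ :=
    mul_mem (mul_mem (transpose_mem_unitaryGroup_iff.mpr hV)
      (transpose_mem_unitaryGroup_iff.mpr hD)) hU
  calc trace (Dᵀ * (U * diagonal σ * Vᵀ))
      = trace (Vᵀ * Dᵀ * U * diagonal σ) := by
        rw [← Matrix.mul_assoc, trace_mul_comm, ← Matrix.mul_assoc, ← Matrix.mul_assoc]
    _ ≤ ∑ i, σ i := trace_mul_diagonal_le_sum_of_mem_orthogonalGroup hW hσ
    _ = trace ((U * Vᵀ)ᵀ * (U * diagonal σ * Vᵀ)) :=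
        (trace_transpose_mul_svd_eq_sum ((mem_orthogonalGroup_iff' ι ℝ).mp hU)
          ((mem_orthogonalGroup_iff' ι ℝ).mp hV) σ).symm

theorem procrustes_cost_eq [CommRing R] {D : Matrix ι ι R} (hD : Dᵀ * D = 1)
    (C Y : Matrix ι κ R) (lam : R) (D₀ : Matrix ι ι R) :
    ∑ i, ∑ j, (D * C - Y) i j ^ 2 + lam * ∑ i, ∑ j, (D - D₀) i j ^ 2 =
      trace (Cᵀ * C) + trace (Yᵀ * Y) + lam * (Fintype.card ι + trace (D₀ᵀ * D₀)) -
        2 * trace (Dᵀ * (Y * Cᵀ + lam • D₀)) := by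
  have hproximal := sum_sq_entries_mul_sub_of_transpose_mul_self_eq_one hD 1 D₀
  rw [Matrix.mul_one] at hproximal
  rw [sum_sq_entries_mul_sub_of_transpose_mul_self_eq_one hD C Y, hproximal, transpose_one,
    Matrix.one_mul, Matrix.mul_one, trace_one, Matrix.mul_add, Matrix.mul_smul, trace_add, trace_smul,
    smul_eq_mul]
  ring

end Matrix

theorem orthogonal_procrustes_general {n m : ℕ}
    (U V : Matrix (Fin n) (Fin n) ℝ)
    (hU : Uᵀ * U = 1) (hV : Vᵀ * V = 1)
    (σ : Fin n → ℝ) (hσ : ∀ i, 0 ≤ σ i)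
    (B : Matrix (Fin n) (Fin n) ℝ) (hB : B = U * Matrix.diagonal σ * Vᵀ)
    (lam : ℝ)
    (C Y : Matrix (Fin n) (Fin m) ℝ) (D₀ : Matrix (Fin n) (Fin n) ℝ)
    (hBdecomp : B = Y * Cᵀ + lam • D₀) :
    (∀ D : Matrix (Fin n) (Fin n) ℝ, Dᵀ * D = 1 →
      Matrix.trace (Dᵀ * B) ≤ Matrix.trace ((U * Vᵀ)ᵀ * B)) ∧
    (∀ D : Matrix (Fin n) (Fin n) ℝ, Dᵀ * D = 1 →
      (∑ i, ∑ j, ((U * Vᵀ * C - Y) i j)^2) + lam * ∑ i, ∑ j, ((U * Vᵀ - D₀) i j)^2 ≤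
      (∑ i, ∑ j, ((D * C - Y) i j)^2) + lam * ∑ i, ∑ j, ((D - D₀) i j)^2) := by
  have hU' := (mem_orthogonalGroup_iff' (Fin n) ℝ).mpr hU
  have hV' := (mem_orthogonalGroup_iff' (Fin n) ℝ).mpr hV
  have hmax : ∀ D : Matrix (Fin n) (Fin n) ℝ, Dᵀ * D = 1 →
      trace (Dᵀ * B) ≤ trace ((U * Vᵀ)ᵀ * B) := fun D hD =>
    hB ▸ trace_transpose_mul_svd_le hU' hV' ((mem_orthogonalGroup_iff' (Fin n) ℝ).mpr hD) hσ
  refine ⟨hmax, fun D hD => ?_⟩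
  have hUV : (U * Vᵀ)ᵀ * (U * Vᵀ) = 1 :=
    (mem_orthogonalGroup_iff' (Fin n) ℝ).mp (mul_mem hU' (transpose_mem_unitaryGroup_iff.mpr hV'))
  rw [procrustes_cost_eq hUV, procrustes_cost_eq hD, ← hBdecomp]
  linarith [hmax D hD]

/-- Orthogonal Procrustes: if `B = UΣVᵀ` with `U, V` orthogonal and `Σ` diagonal with
nonnegative entries, then `D* = UVᵀ` maximizes `D ↦ trace(DᵀB)` over orthogonal `D`;
equivalently, it minimizes `D ↦ ‖DC - Y‖_F² + λ‖D - D₀‖_F²` where `B = YCᵀ + λD₀`. -/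
theorem orthogonal_procrustes {n m : ℕ}
    (U V : Matrix (Fin n) (Fin n) ℝ)
    (hU : Uᵀ * U = 1) (hV : Vᵀ * V = 1)
    (σ : Fin n → ℝ) (hσ : ∀ i, 0 ≤ σ i)
    (B : Matrix (Fin n) (Fin n) ℝ) (hB : B = U * Matrix.diagonal σ * Vᵀ)
    (lam : ℝ) (hlam : 0 ≤ lam)
    (C Y : Matrix (Fin n) (Fin m) ℝ) (D₀ : Matrix (Fin n) (Fin n) ℝ)
    (hBdecomp : B = Y * Cᵀ + lam • D₀) :
    (∀ D : Matrix (Fin n) (Fin n) ℝ, Dᵀ * D = 1 →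
      Matrix.trace (Dᵀ * B) ≤ Matrix.trace ((U * Vᵀ)ᵀ * B)) ∧
    (∀ D : Matrix (Fin n) (Fin n) ℝ, Dᵀ * D = 1 →
      (∑ i, ∑ j, ((U * Vᵀ * C - Y) i j)^2) + lam * ∑ i, ∑ j, ((U * Vᵀ - D₀) i j)^2 ≤
      (∑ i, ∑ j, ((D * C - Y) i j)^2) + lam * ∑ i, ∑ j, ((D - D₀) i j)^2) :=
  orthogonal_procrustes_general U V hU hV σ hσ B hB lam C Y D₀ hBdecomp
end

section
/- Let K ⊆ ℝ^p be nonempty compact convex, Π, 𝒩 : K → ℝ^m continuous with sup_{q∈K} ‖Π(q) − 𝒩(q)‖ ≤ ε, A : ℝ^m → ℝ^d linear with operator norm ‖A‖, and y ∈ ℝ^d. Set F(q) = (1/2)‖A(Π(q)) − y‖² and G(q) = (1/2)‖A(𝒩(q)) − y‖². Then |min_K F − min_K G| ≤ ‖A‖·ε·(M + ‖A‖·ε/2), where M = sup_{q∈K} ‖A(Π(q)) − y‖. -/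
/-! Pointwise, `F q - G q = ½ (a - b)(a + b)` with `a = ‖A(Π q) - y‖`, `b = ‖A(𝒩 q) - y‖`.
Since `|a - b| ≤ ‖A‖ ε`, `a ≤ M` and `b ≤ M + ‖A‖ ε`, this gives `|F q - G q| ≤ ‖A‖ ε (M + ‖A‖ ε / 2)`
uniformly on `K`, and a uniform bound on `|F - G|` passes to the infima. -/

theorem abs_half_sq_sub_half_sq_le {a b δ M : ℝ} (ha : 0 ≤ a) (hb : 0 ≤ b)
    (hab : |a - b| ≤ δ) (haM : a ≤ M) :
    |1 / 2 * a ^ 2 - 1 / 2 * b ^ 2| ≤ δ * (M + δ / 2) := by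
  have hsum : a + b ≤ 2 * M + δ := by linarith [(abs_le.mp hab).1]
  calc |1 / 2 * a ^ 2 - 1 / 2 * b ^ 2| = 1 / 2 * (|a - b| * (a + b)) := by
        rw [show 1 / 2 * a ^ 2 - 1 / 2 * b ^ 2 = 1 / 2 * ((a - b) * (a + b)) by ring, abs_mul,
          abs_mul, abs_of_nonneg (add_nonneg ha hb)]
        norm_num
    _ ≤ 1 / 2 * (δ * (2 * M + δ)) := by gcongr; exact (abs_nonneg _).trans hab
    _ = δ * (M + δ / 2) := by ring

theorem ContinuousLinearMap.abs_norm_apply_sub_sub_norm_apply_sub_le {𝕜 E F : Type*}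
    [NontriviallyNormedField 𝕜] [SeminormedAddCommGroup E] [SeminormedAddCommGroup F]
    [NormedSpace 𝕜 E] [NormedSpace 𝕜 F] (A : E →L[𝕜] F) (u v : E) (y : F) :
    |‖A u - y‖ - ‖A v - y‖| ≤ ‖A‖ * ‖u - v‖ :=
  calc |‖A u - y‖ - ‖A v - y‖| ≤ ‖(A u - y) - (A v - y)‖ := abs_norm_sub_norm_le _ _
    _ = ‖A (u - v)‖ := by rw [sub_sub_sub_cancel_right, map_sub]
    _ ≤ ‖A‖ * ‖u - v‖ := A.le_opNorm _

theorem csInf_image_le_csInf_image_add {α : Type*} {s : Set α} {f g : α → ℝ} {C : ℝ}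
    (hs : s.Nonempty) (hf : BddBelow (f '' s)) (hfg : ∀ x ∈ s, f x ≤ g x + C) :
    sInf (f '' s) ≤ sInf (g '' s) + C := by
  rw [← sub_le_iff_le_add]
  refine le_csInf (hs.image g) ?_
  rintro _ ⟨x, hx, rfl⟩
  linarith [csInf_le hf (Set.mem_image_of_mem f hx), hfg x hx]

theorem abs_csInf_image_sub_csInf_image_le {α : Type*} {s : Set α} {f g : α → ℝ} {C : ℝ}
    (hs : s.Nonempty) (hf : BddBelow (f '' s)) (hg : BddBelow (g '' s))
    (hfg : ∀ x ∈ s, |f x - g x| ≤ C) :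
    |sInf (f '' s) - sInf (g '' s)| ≤ C := by
  have hfg' : sInf (f '' s) ≤ sInf (g '' s) + C :=
    csInf_image_le_csInf_image_add hs hf fun x hx => by linarith [(abs_le.mp (hfg x hx)).2]
  have hgf : sInf (g '' s) ≤ sInf (f '' s) + C :=
    csInf_image_le_csInf_image_add hs hg fun x hx => by linarith [(abs_le.mp (hfg x hx)).1]
  exact abs_sub_le_iff.mpr ⟨by linarith, by linarith⟩

theorem learning_informed_value_error_bound_general {p m d : ℕ}
    (K : Set (EuclideanSpace ℝ (Fin p))) (hKne : K.Nonempty) (hKcomp : IsCompact K)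
    (Pi N : EuclideanSpace ℝ (Fin p) → EuclideanSpace ℝ (Fin m))
    (hPi : ContinuousOn Pi K)
    (ε : ℝ) (happrox : ∀ q ∈ K, ‖Pi q - N q‖ ≤ ε)
    (A : EuclideanSpace ℝ (Fin m) →L[ℝ] EuclideanSpace ℝ (Fin d))
    (y : EuclideanSpace ℝ (Fin d))
    (F G : EuclideanSpace ℝ (Fin p) → ℝ)
    (hF : ∀ q, F q = (1/2) * ‖A (Pi q) - y‖^2)
    (hG : ∀ q, G q = (1/2) * ‖A (N q) - y‖^2)
    (M : ℝ) (hM : M = sSup ((fun q => ‖A (Pi q) - y‖) '' K)) :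
    |sInf (F '' K) - sInf (G '' K)| ≤ ‖A‖ * ε * (M + ‖A‖ * ε / 2) := by
  have hresidual_le : ∀ q ∈ K, ‖A (Pi q) - y‖ ≤ M := fun q hq => by
    have hcont : ContinuousOn (fun q => ‖A (Pi q) - y‖) K :=
      ((A.continuous.comp_continuousOn hPi).sub continuousOn_const).norm
    exact hM ▸ le_csSup (hKcomp.image_of_continuousOn hcont).bddAbove (Set.mem_image_of_mem _ hq)
  have hpointwise : ∀ q ∈ K, |F q - G q| ≤ ‖A‖ * ε * (M + ‖A‖ * ε / 2) := fun q hq => by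
    rw [hF, hG]
    refine abs_half_sq_sub_half_sq_le (norm_nonneg _) (norm_nonneg _) ?_ (hresidual_le q hq)
    exact (A.abs_norm_apply_sub_sub_norm_apply_sub_le _ _ y).trans
      (mul_le_mul_of_nonneg_left (happrox q hq) (norm_nonneg A))
  have hbdd : ∀ {H : EuclideanSpace ℝ (Fin p) → ℝ}, (∀ q, 0 ≤ H q) → BddBelow (H '' K) :=
    fun hH => ⟨0, by rintro _ ⟨q, -, rfl⟩; exact hH q⟩
  exact abs_csInf_image_sub_csInf_image_le hKne (hbdd fun q => by rw [hF]; positivity)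
    (hbdd fun q => by rw [hG]; positivity) hpointwise

/-- Quantitative error bound for the optimal value of the learning-informed qMRI problem:
if `sup_{q∈K} ‖Π(q) − 𝒩(q)‖ ≤ ε`, then
`|min_K F − min_K G| ≤ ‖A‖·ε·(M + ‖A‖·ε/2)` where `M = sup_{q∈K} ‖A(Π(q)) − y‖`. -/
theorem learning_informed_value_error_bound {p m d : ℕ}
    (K : Set (EuclideanSpace ℝ (Fin p))) (hKne : K.Nonempty) (hKcomp : IsCompact K)
    (hKconv : Convex ℝ K)
    (Pi N : EuclideanSpace ℝ (Fin p) → EuclideanSpace ℝ (Fin m))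
    (hPi : ContinuousOn Pi K) (hN : ContinuousOn N K)
    (ε : ℝ) (hε : 0 ≤ ε) (happrox : ∀ q ∈ K, ‖Pi q - N q‖ ≤ ε)
    (A : EuclideanSpace ℝ (Fin m) →L[ℝ] EuclideanSpace ℝ (Fin d))
    (y : EuclideanSpace ℝ (Fin d))
    (F G : EuclideanSpace ℝ (Fin p) → ℝ)
    (hF : ∀ q, F q = (1/2) * ‖A (Pi q) - y‖^2)
    (hG : ∀ q, G q = (1/2) * ‖A (N q) - y‖^2)
    (M : ℝ) (hM : M = sSup ((fun q => ‖A (Pi q) - y‖) '' K)) :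
    |sInf (F '' K) - sInf (G '' K)| ≤ ‖A‖ * ε * (M + ‖A‖ * ε / 2) :=
  learning_informed_value_error_bound_general K hKne hKcomp Pi N hPi ε happrox A y F G hF hG M hM
end
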